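/- Let φ = (1+√5)/2 and ξ ∈ ℝ. Define 𝔩(X) = 14φX − 22ξ − 4φ³, 𝔱(X) = 20X³ + 5φ²X² − 90φξX − 135ξ² − 20φ³ξ, f(X) = 7φX³ − 7φ²X² − (11ξ + 2φ³)X − 7ξφ, g(X) = X³ − 2φX² + φ²X − 4ξ, h(X) = 2X³ − φX² + ξ. Then for every real X ≠ 0: X⁴ · 𝔩((X³ − φX² − ξ)/X) · 𝔱((X³ − φX² − ξ)/X) = 10 · h(X)² · f(X) · g(X). -/
import Mathlib


/-- The golden ratio. -/
noncomputable def φ : ℝ := (1 + Real.sqrt 5) / 2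

/-- `𝔩_ξ(X) = 14φX − 22ξ − 4φ³`. -/
noncomputable def lpoly (ξ X : ℝ) : ℝ := 14 * φ * X - 22 * ξ - 4 * φ ^ 3

/-- `𝔱_ξ(X) = 20X³ + 5φ²X² − 90φξX − 135ξ² − 20φ³ξ`. -/
noncomputable def tpoly (ξ X : ℝ) : ℝ :=
  20 * X ^ 3 + 5 * φ ^ 2 * X ^ 2 - 90 * φ * ξ * X - 135 * ξ ^ 2 - 20 * φ ^ 3 * ξ

/-- `f_ξ(X) = 7φX³ − 7φ²X² − (11ξ + 2φ³)X − 7ξφ`. -/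
noncomputable def fpoly (ξ X : ℝ) : ℝ :=
  7 * φ * X ^ 3 - 7 * φ ^ 2 * X ^ 2 - (11 * ξ + 2 * φ ^ 3) * X - 7 * ξ * φ

/-- `g_ξ(X) = X³ − 2φX² + φ²X − 4ξ`. -/
noncomputable def gpoly (ξ X : ℝ) : ℝ :=
  X ^ 3 - 2 * φ * X ^ 2 + φ ^ 2 * X - 4 * ξ

/-- `h_ξ(X) = 2X³ − φX² + ξ`. -/
noncomputable def hpoly (ξ X : ℝ) : ℝ :=
  2 * X ^ 3 - φ * X ^ 2 + ξ

/-- `X⁴·𝔩((X³ − φX² − ξ)/X)·𝔱((X³ − φX² − ξ)/X) = 10·h(X)²·f(X)·g(X)`. -/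
theorem stmt14 (ξ : ℝ) (X : ℝ) (hX : X ≠ 0) :
    X ^ 4 * lpoly ξ ((X ^ 3 - φ * X ^ 2 - ξ) / X) * tpoly ξ ((X ^ 3 - φ * X ^ 2 - ξ) / X)
      = 10 * (hpoly ξ X) ^ 2 * fpoly ξ X * gpoly ξ X := by
  unfold lpoly tpoly fpoly gpoly hpoly
  field_simp
  ring
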